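/- Let E be a finite type and 𝒰 a collection of subsets of E. Then there exists a matroid M on the ground set E such that 𝒰 is exactly the collection of all (possibly empty) unions of cocircuits of M if and only if the following three conditions hold: (1) ∅ ∈ 𝒰; (2) X ∪ Y ∈ 𝒰 for all X, Y ∈ 𝒰; (3) for every nonempty X ∈ 𝒰, the sets X ∖ Y, where Y ranges over the maximal elements of {Y ∈ 𝒰 : Y ⊊ X} (ordered by inclusion), are pairwise disjoint and their union is X. -/

import Mathlib

/-!
A set is a union of cocircuits iff its complement is a flat: every element outside a flat `F`
is separated from `F` by a hyperplane, obtained by extending a basis of `F` plus that element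
to a base and dropping the element again. So the question is which families
`ℱ = {Xᶜ | X ∈ 𝒰}` are the flats of a matroid, and conditions (1)–(3) say exactly that `ℱ`
contains the ground set, is closed under intersection, and that the covers of each `F ∈ ℱ`
partition the complement of `F`. For the flats of a matroid the cover of `F` containing `z` is
the closure of `F ∪ {z}`. Conversely, if every element outside `F` lies in a cover of `F`, then
the closure operator of `ℱ` has the Mac Lane–Steinitz exchange property, and the sets none of
whose elements lies in the closure of the others are the independent sets of a matroid whose
closure operator is that of `ℱ`.
-/

open Set Function Module Submodule

/-- The rank function of a matroid: the size of a largest independent subset of `S`. -/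
noncomputable def mrk {E : Type*} (M : Matroid E) (S : Set E) : ℕ :=
  sSup (Set.ncard '' {I : Set E | M.Indep I ∧ I ⊆ S})

/-- A hyperplane of a matroid: a flat of rank one less than the rank of the matroid. -/
def IsHyperplaneOf {E : Type*} (M : Matroid E) (H : Set E) : Prop :=
  M.IsFlat H ∧ mrk M H + 1 = mrk M M.E

/-- A cocircuit of a matroid: the complement (in the ground set) of a hyperplane. -/
def IsCocircuitOf {E : Type*} (M : Matroid E) (C : Set E) : Prop :=
  ∃ H, IsHyperplaneOf M H ∧ C = M.E \ H

/-- `Y` is a maximal element of `{Y ∈ 𝒰 : Y ⊊ X}` (ordered by inclusion). -/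
def MaxBelow {E : Type*} (𝒰 : Set (Set E)) (X Y : Set E) : Prop :=
  Y ∈ 𝒰 ∧ Y ⊂ X ∧ ∀ Z ∈ 𝒰, Z ⊂ X → Y ⊆ Z → Y = Z

section Covers

variable {α : Type*} {ℱ 𝒰 : Set (Set α)} {F G G' X Y : Set α} {z : α}

def IsCoverIn (ℱ : Set (Set α)) (F G : Set α) : Prop :=
  Minimal (fun W ↦ W ∈ ℱ ∧ F ⊂ W) G

lemma IsCoverIn.eq_of_mem_of_mem (hℱ : InfClosed ℱ) (hG : IsCoverIn ℱ F G)
    (hG' : IsCoverIn ℱ F G') (hzF : z ∉ F) (hzG : z ∈ G) (hzG' : z ∈ G') : G = G' := by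
  have hcap : G ∩ G' ∈ ℱ ∧ F ⊂ G ∩ G' :=
    ⟨hℱ hG.1.1 hG'.1.1, ssubset_of_subset_of_ne (subset_inter hG.1.2.subset hG'.1.2.subset)
      fun h ↦ hzF (h ▸ ⟨hzG, hzG'⟩)⟩
  exact (hG.2 hcap inter_subset_left).trans inter_subset_right |>.antisymm
    ((hG'.2 hcap inter_subset_right).trans inter_subset_left)

lemma maxBelow_iff_isCoverIn_compl : MaxBelow 𝒰 X Y ↔ IsCoverIn (compl ⁻¹' 𝒰) Xᶜ Yᶜ := by
  rw [IsCoverIn, Minimal, compl_surjective.forall]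
  simp only [MaxBelow, mem_preimage, compl_compl, compl_lt_compl_iff_lt, compl_subset_compl,
    and_imp]
  rw [and_assoc]
  refine and_congr_right fun _ ↦ and_congr_right fun _ ↦ forall₂_congr fun Z _ ↦
    forall₂_congr fun _ (hYZ : Y ⊆ Z) ↦ ⟨fun h ↦ h.ge, hYZ.antisymm⟩

structure FlatAxioms (ℱ : Set (Set α)) : Prop where
  univ_mem : univ ∈ ℱ
  infClosed : InfClosed ℱ
  exists_isCoverIn : ∀ F ∈ ℱ, ∀ z ∉ F, ∃ G, IsCoverIn ℱ F G ∧ z ∈ G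

lemma flatAxioms_compl_preimage_iff :
    FlatAxioms (compl ⁻¹' 𝒰) ↔
      ∅ ∈ 𝒰 ∧ (∀ X ∈ 𝒰, ∀ Y ∈ 𝒰, X ∪ Y ∈ 𝒰) ∧
      (∀ X ∈ 𝒰, X.Nonempty →
        (∀ Y₁ Y₂ : Set α, MaxBelow 𝒰 X Y₁ → MaxBelow 𝒰 X Y₂ → Y₁ ≠ Y₂ →
          (X \ Y₁) ∩ (X \ Y₂) = ∅) ∧
        (⋃ Y ∈ {Y : Set α | MaxBelow 𝒰 X Y}, X \ Y) = X) := by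
  have hinf : InfClosed (compl ⁻¹' 𝒰) ↔ ∀ X ∈ 𝒰, ∀ Y ∈ 𝒰, X ∪ Y ∈ 𝒰 :=
    ⟨fun h X hX Y hY ↦ by simpa [compl_inter] using h (a := Xᶜ) (by simpa) (b := Yᶜ) (by simpa),
      fun h _ ha _ hb ↦ by simpa [compl_inter] using h _ ha _ hb⟩
  constructor
  · rintro ⟨huniv, hℱ, hcover⟩
    refine ⟨by simpa using huniv, hinf.1 hℱ, fun X hX _ ↦ ⟨?_, ?_⟩⟩
    · rintro Y₁ Y₂ hY₁ hY₂ hne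
      refine eq_empty_of_forall_notMem fun z ⟨⟨hzX, hzY₁⟩, _, hzY₂⟩ ↦ hne (compl_inj_iff.1 ?_)
      exact (maxBelow_iff_isCoverIn_compl.1 hY₁).eq_of_mem_of_mem hℱ
        (maxBelow_iff_isCoverIn_compl.1 hY₂) (notMem_compl_iff.2 hzX) hzY₁ hzY₂
    · refine subset_antisymm (iUnion₂_subset fun _ _ ↦ sdiff_subset) fun z hzX ↦ ?_
      obtain ⟨G, hG, hzG⟩ := hcover Xᶜ (by simpa) z (notMem_compl_iff.2 hzX)
      exact mem_iUnion₂.2 ⟨Gᶜ, maxBelow_iff_isCoverIn_compl.2 (by simpa), hzX, by simpa⟩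
  · rintro ⟨h𝒰, hunion, hcover⟩
    refine ⟨by simpa, hinf.2 hunion, fun F hF z hzF ↦ ?_⟩
    have hz : z ∈ ⋃ Y ∈ {Y : Set α | MaxBelow 𝒰 Fᶜ Y}, Fᶜ \ Y := by
      rwa [(hcover Fᶜ hF ⟨z, hzF⟩).2]
    obtain ⟨Y, hY, -, hzY⟩ := mem_iUnion₂.1 hz
    exact ⟨Yᶜ, by simpa using maxBelow_iff_isCoverIn_compl.1 hY, hzY⟩

end Covers

namespace Matroid

variable {α : Type*} {M : Matroid α} {F G I S X : Set α} {x z : α}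

lemma IsBasis.mrk_eq_ncard [M.RankFinite] (hI : M.IsBasis I S) : mrk M S = I.ncard := by
  refine IsGreatest.csSup_eq ⟨⟨I, ⟨hI.indep, hI.subset⟩, rfl⟩, ?_⟩
  rintro _ ⟨J, ⟨hJ, hJS⟩, rfl⟩
  obtain ⟨J', hJ', hJJ'⟩ := hJ.subset_isBasis_of_subset hJS hI.subset_ground
  calc J.ncard ≤ J'.ncard := ncard_le_ncard hJJ' hJ'.indep.finite
    _ = I.ncard := by rw [ncard_def, ncard_def, hJ'.encard_eq_encard hI]

lemma IsFlat.inter (hF : M.IsFlat F) (hG : M.IsFlat G) : M.IsFlat (F ∩ G) := by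
  rw [inter_eq_iInter]
  exact IsFlat.iInter fun b ↦ by cases b <;> assumption

lemma IsFlat.exists_isHyperplaneOf_superset [M.RankFinite] (hF : M.IsFlat F) (hx : x ∈ M.E \ F) :
    ∃ H, IsHyperplaneOf M H ∧ F ⊆ H ∧ x ∉ H := by
  obtain ⟨I, hI⟩ := M.exists_isBasis F
  have hxI : x ∉ I := fun h ↦ hx.2 (hI.subset h)
  have hxI' : M.Indep (insert x I) := by
    rwa [hI.indep.insert_indep_iff_of_notMem hxI, hI.closure_eq_closure, hF.closure]
  obtain ⟨B, hB, hxIB⟩ := hxI'.exists_isBase_superset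
  have hxB : x ∈ B := hxIB (mem_insert x I)
  refine ⟨M.closure (B \ {x}), ⟨isFlat_closure _, ?_⟩, ?_,
    hB.indep.notMem_closure_sdiff_of_mem hxB⟩
  · rw [(hB.indep.subset sdiff_subset).isBasis_closure.mrk_eq_ncard,
      hB.isBasis_ground.mrk_eq_ncard, ncard_sdiff_singleton_add_one hxB hB.indep.finite]
  · calc F = M.closure I := by rw [hI.closure_eq_closure, hF.closure]
      _ ⊆ M.closure (B \ {x}) :=
        M.closure_subset_closure (subset_sdiff_singleton ((subset_insert x I).trans hxIB) hxI)

lemma exists_cocircuits_sUnion_eq_iff [M.RankFinite] :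
    (∃ 𝒞 : Set (Set α), (∀ C ∈ 𝒞, IsCocircuitOf M C) ∧ X = ⋃₀ 𝒞) ↔
      X ⊆ M.E ∧ M.IsFlat (M.E \ X) := by
  constructor
  · rintro ⟨𝒞, h𝒞, rfl⟩
    have hcl : M.closure (M.E \ ⋃₀ 𝒞) ⊆ M.E \ ⋃₀ 𝒞 := by
      rintro y hy
      refine ⟨M.closure_subset_ground _ hy, ?_⟩
      rintro ⟨C, hC, hyC⟩
      obtain ⟨H, ⟨hH, -⟩, rfl⟩ := h𝒞 C hC
      have hsub : M.E \ ⋃₀ 𝒞 ⊆ H := fun w hw ↦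
        by_contra fun hwH ↦ hw.2 ⟨M.E \ H, hC, hw.1, hwH⟩
      exact hyC.2 (hH.closure ▸ M.closure_subset_closure hsub hy)
    refine ⟨sUnion_subset fun C hC ↦ ?_,
      isFlat_iff_closure_eq.2 (hcl.antisymm (M.subset_closure _))⟩
    obtain ⟨H, -, rfl⟩ := h𝒞 C hC
    exact sdiff_subset
  · rintro ⟨hXE, hflat⟩
    refine ⟨{C | IsCocircuitOf M C ∧ C ⊆ X}, fun C hC ↦ hC.1,
      subset_antisymm (fun y hy ↦ ?_) (sUnion_subset fun C hC ↦ hC.2)⟩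
    obtain ⟨H, hH, hXH, hyH⟩ := hflat.exists_isHyperplaneOf_superset ⟨hXE hy, fun h ↦ h.2 hy⟩
    refine ⟨M.E \ H, ⟨⟨H, hH, rfl⟩, fun w hw ↦ by_contra fun hwX ↦ hw.2 (hXH ⟨hw.1, hwX⟩)⟩,
      hXE hy, hyH⟩

lemma IsFlat.isCoverIn_closure_insert (hF : M.IsFlat F) (hz : z ∈ M.E \ F) :
    IsCoverIn {F | M.IsFlat F} F (M.closure (insert z F)) := by
  have hzF : insert z F ⊆ M.E := insert_subset hz.1 hF.subset_ground
  refine ⟨⟨isFlat_closure _, ssubset_of_subset_of_ne ((subset_insert z F).trans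
    (M.subset_closure _ hzF)) fun h ↦ hz.2 (h ▸ M.mem_closure_of_mem (mem_insert z F) hzF)⟩,
    fun W ⟨hW, hFW⟩ hWcl ↦ ?_⟩
  obtain ⟨w, hwW, hwF⟩ := exists_of_ssubset hFW
  have hzw : z ∈ M.closure (insert w F) :=
    (closure_exchange ⟨hWcl hwW, by rwa [hF.closure]⟩).1
  have hzW : insert z F ⊆ W :=
    insert_subset (hW.closure ▸ M.closure_subset_closure (insert_subset hwW hFW.subset) hzw)
      hFW.subset
  exact hW.closure ▸ M.closure_subset_closure hzW

lemma flatAxioms_setOf_isFlat (hE : M.E = univ) : FlatAxioms {F | M.IsFlat F} where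
  univ_mem := hE ▸ M.ground_isFlat
  infClosed _ hF _ hG := hF.inter hG
  exists_isCoverIn F hF z hz :=
    ⟨_, hF.isCoverIn_closure_insert ⟨hE ▸ mem_univ z, hz⟩,
      M.mem_closure_of_mem (mem_insert z F) (hE ▸ subset_univ _)⟩

end Matroid

section Closure

variable {α : Type*} {ℱ : Set (Set α)} {F I J S T : Set α} {z : α}

def closureIn (ℱ : Set (Set α)) (S : Set α) : Set α := ⋂₀ {F ∈ ℱ | S ⊆ F}

lemma subset_closureIn : S ⊆ closureIn ℱ S := subset_sInter fun _ hF ↦ hF.2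

lemma closureIn_mono (h : S ⊆ T) : closureIn ℱ S ⊆ closureIn ℱ T :=
  sInter_subset_sInter fun _ hF ↦ ⟨hF.1, h.trans hF.2⟩

lemma closureIn_subset (hF : F ∈ ℱ) (h : S ⊆ F) : closureIn ℱ S ⊆ F :=
  sInter_subset_of_mem ⟨hF, h⟩

lemma closureIn_eq_self (hF : F ∈ ℱ) : closureIn ℱ F = F :=
  (closureIn_subset hF subset_rfl).antisymm subset_closureIn

lemma IsCoverIn.eq_closureIn_insert (hG : IsCoverIn ℱ F G) (hz : z ∈ G \ F)
    (hmem : closureIn ℱ (insert z F) ∈ ℱ) : G = closureIn ℱ (insert z F) := by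
  have hsub : closureIn ℱ (insert z F) ⊆ G :=
    closureIn_subset hG.1.1 (insert_subset hz.1 hG.1.2.subset)
  refine hsub.antisymm' (hG.2 ⟨hmem, ssubset_of_subset_of_ne ?_ ?_⟩ hsub)
  · exact (subset_insert z F).trans subset_closureIn
  · exact fun h ↦ hz.2 (h ▸ subset_closureIn (mem_insert z F))

def IndepIn (ℱ : Set (Set α)) (I : Set α) : Prop := ∀ x ∈ I, x ∉ closureIn ℱ (I \ {x})

lemma indepIn_empty : IndepIn ℱ ∅ := fun _ ↦ False.elim

lemma IndepIn.subset (hI : IndepIn ℱ I) (hJI : J ⊆ I) : IndepIn ℱ J :=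
  fun x hx hcl ↦ hI x (hJI hx) (closureIn_mono (sdiff_subset_sdiff_left hJI) hcl)

lemma IndepIn.eq_of_subset_of_subset_closureIn (hJ : IndepIn ℱ J) (hIJ : I ⊆ J)
    (hJI : J ⊆ closureIn ℱ I) : I = J :=
  hIJ.antisymm fun y hyJ ↦ by_contra fun hyI ↦
    hJ y hyJ (closureIn_mono (subset_sdiff_singleton hIJ hyI) (hJI hyJ))

end Closure

namespace FlatAxioms

variable {α : Type*} [Finite α] {ℱ : Set (Set α)} (h : FlatAxioms ℱ)
  {F I J S T : Set α} {a b x : α}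
include h

lemma closureIn_mem (S : Set α) : closureIn ℱ S ∈ ℱ :=
  h.infClosed.sInf_mem (toFinite _) h.univ_mem fun _ hF ↦ hF.1

lemma closureIn_subset_closureIn (hST : S ⊆ closureIn ℱ T) : closureIn ℱ S ⊆ closureIn ℱ T :=
  closureIn_subset (h.closureIn_mem T) hST

lemma closureIn_insert_closureIn (b : α) (S : Set α) :
    closureIn ℱ (insert b (closureIn ℱ S)) = closureIn ℱ (insert b S) :=
  (h.closureIn_subset_closureIn (insert_subset (subset_closureIn (mem_insert b S))
    (closureIn_mono (subset_insert b S)))).antisymm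
    (closureIn_mono (insert_subset_insert subset_closureIn))

lemma closureIn_exchange (ha : a ∈ closureIn ℱ (insert b S)) (ha' : a ∉ closureIn ℱ S) :
    b ∈ closureIn ℱ (insert a S) := by
  set F := closureIn ℱ S
  have hF : F ∈ ℱ := h.closureIn_mem S
  have hbF : b ∉ F := fun hb ↦ ha' (closureIn_subset hF (insert_subset hb subset_closureIn) ha)
  obtain ⟨G, hG, hbG⟩ := h.exists_isCoverIn F hF b hbF
  have hGb : G = closureIn ℱ (insert b S) := by
    rw [hG.eq_closureIn_insert ⟨hbG, hbF⟩ (h.closureIn_mem _), h.closureIn_insert_closureIn]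
  have hGa : G = closureIn ℱ (insert a S) := by
    rw [hG.eq_closureIn_insert ⟨hGb ▸ ha, ha'⟩ (h.closureIn_mem _), h.closureIn_insert_closureIn]
  exact hGa ▸ hbG

lemma indepIn_insert_iff (hI : IndepIn ℱ I) (hxI : x ∉ I) :
    IndepIn ℱ (insert x I) ↔ x ∉ closureIn ℱ I := by
  refine ⟨fun hxI' ↦ by simpa [hxI] using hxI' x (mem_insert x I), fun hx y hy hycl ↦ ?_⟩
  obtain rfl | ⟨hyx, hyI⟩ : y = x ∨ y ≠ x ∧ y ∈ I := by grind
  · exact hx (by simpa [hxI] using hycl)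
  · rw [insert_sdiff_of_notMem _ (by simpa using hyx.symm)] at hycl
    have hxy := h.closureIn_exchange hycl (hI y hyI)
    rw [insert_sdiff_singleton, insert_eq_of_mem hyI] at hxy
    exact hx hxy

lemma exists_indepIn_swap (hI : IndepIn ℱ I) (hJI : J ⊆ closureIn ℱ I) (hx : x ∈ I \ J) :
    ∃ I', IndepIn ℱ I' ∧ J ⊆ closureIn ℱ I' ∧ I'.ncard ≤ I.ncard ∧ I' \ J = (I \ J) \ {x} := by
  by_cases hJ : J ⊆ closureIn ℱ (I \ {x})
  · exact ⟨I \ {x}, hI.subset sdiff_subset, hJ, ncard_le_ncard sdiff_subset, Set.sdiff_sdiff_comm⟩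
  obtain ⟨y, hyJ, hy⟩ := not_subset.1 hJ
  have hyI : y ∉ I \ {x} := fun h ↦ hy (subset_closureIn h)
  have hxI : insert x (I \ {x}) = I := by rw [insert_sdiff_singleton, insert_eq_of_mem hx.1]
  have hxy : x ∈ closureIn ℱ (insert y (I \ {x})) :=
    h.closureIn_exchange (by rw [hxI]; exact hJI hyJ) hy
  refine ⟨insert y (I \ {x}), (h.indepIn_insert_iff (hI.subset sdiff_subset) hyI).2 hy,
    hJI.trans (h.closureIn_subset_closureIn ?_), ?_, ?_⟩
  · exact hxI.symm.subset.trans (insert_subset hxy ((subset_insert _ _).trans subset_closureIn))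
  · rw [ncard_insert_of_notMem hyI, ncard_sdiff_singleton_add_one hx.1]
  · rw [insert_sdiff_of_mem _ hyJ, Set.sdiff_sdiff_comm]

lemma ncard_le_of_subset_closureIn (hI : IndepIn ℱ I) (hJ : IndepIn ℱ J)
    (hJI : J ⊆ closureIn ℱ I) : J.ncard ≤ I.ncard := by
  induction hn : (I \ J).ncard generalizing I with
  | zero =>
    have hIJ : I ⊆ J := sdiff_eq_empty.1 ((ncard_eq_zero).1 hn)
    rw [hJ.eq_of_subset_of_subset_closureIn hIJ hJI]
  | succ n ih =>
    obtain ⟨x, hx⟩ := nonempty_of_ncard_ne_zero (s := I \ J) (by omega)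
    obtain ⟨I', hI', hJI', hcard, hdiff⟩ := h.exists_indepIn_swap hI hJI hx
    refine (ih hI' hJI' ?_).trans hcard
    rw [hdiff, ncard_sdiff_singleton_of_mem hx, hn, Nat.add_sub_cancel]

lemma exists_insert_indepIn (hI : IndepIn ℱ I) (hJ : IndepIn ℱ J) (hlt : I.ncard < J.ncard) :
    ∃ e ∈ J, e ∉ I ∧ IndepIn ℱ (insert e I) := by
  by_contra! hno
  refine hlt.not_ge (h.ncard_le_of_subset_closureIn hI hJ fun e he ↦ ?_)
  by_cases heI : e ∈ I
  · exact subset_closureIn heI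
  · by_contra hecl
    exact hno e he heI ((h.indepIn_insert_iff hI heI).2 hecl)

protected def matroid : Matroid α :=
  (IndepMatroid.ofFinite finite_univ (IndepIn ℱ) indepIn_empty (fun _ _ hJ hIJ ↦ hJ.subset hIJ)
    (fun _ _ ↦ h.exists_insert_indepIn) fun I _ ↦ subset_univ I).matroid

lemma matroid_ground : h.matroid.E = univ := rfl

lemma matroid_indep_iff : h.matroid.Indep I ↔ IndepIn ℱ I := Iff.rfl

lemma matroid_closure_eq_of_indepIn (hI : IndepIn ℱ I) :
    h.matroid.closure I = closureIn ℱ I := by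
  ext x
  rw [(h.matroid_indep_iff.2 hI).mem_closure_iff', matroid_indep_iff, matroid_ground]
  by_cases hxI : x ∈ I
  · simp [hxI, subset_closureIn hxI]
  · simp [hxI, h.indepIn_insert_iff hI hxI]

lemma matroid_closure (S : Set α) : h.matroid.closure S = closureIn ℱ S := by
  obtain ⟨I, hI⟩ := h.matroid.exists_isBasis S (by simp [matroid_ground])
  have hIS := h.matroid_closure_eq_of_indepIn (h.matroid_indep_iff.1 hI.indep)
  rw [← hI.closure_eq_closure, hIS]
  refine (closureIn_mono hI.subset).antisymm (h.closureIn_subset_closureIn ?_)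
  rw [← hIS, hI.closure_eq_closure]
  exact h.matroid.subset_closure S (by simp [matroid_ground])

lemma matroid_isFlat_iff : h.matroid.IsFlat F ↔ F ∈ ℱ := by
  rw [Matroid.isFlat_iff_closure_eq, matroid_closure]
  exact ⟨fun hF ↦ hF ▸ h.closureIn_mem F, closureIn_eq_self⟩

end FlatAxioms

/-- a collection `𝒰` of subsets of `E` is the collection of all (possibly
empty) unions of cocircuits of some matroid on `E` iff (1) `∅ ∈ 𝒰`; (2) `𝒰` is closed under
unions; (3) for every nonempty `X ∈ 𝒰`, the sets `X ∖ Y`, for `Y` maximal in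
`{Y ∈ 𝒰 : Y ⊊ X}`, are pairwise disjoint with union `X`. -/
theorem stmt18 {E : Type*} [Fintype E] (𝒰 : Set (Set E)) :
    (∃ M : Matroid E, M.E = Set.univ ∧
      ∀ X : Set E, X ∈ 𝒰 ↔
        ∃ 𝒞 : Set (Set E), (∀ C ∈ 𝒞, IsCocircuitOf M C) ∧ X = ⋃₀ 𝒞) ↔
    (∅ ∈ 𝒰 ∧
      (∀ X ∈ 𝒰, ∀ Y ∈ 𝒰, X ∪ Y ∈ 𝒰) ∧
      (∀ X ∈ 𝒰, X.Nonempty →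
        (∀ Y₁ Y₂ : Set E, MaxBelow 𝒰 X Y₁ → MaxBelow 𝒰 X Y₂ → Y₁ ≠ Y₂ →
          (X \ Y₁) ∩ (X \ Y₂) = ∅) ∧
        (⋃ Y ∈ {Y : Set E | MaxBelow 𝒰 X Y}, X \ Y) = X)) := by
  rw [← flatAxioms_compl_preimage_iff]
  constructor
  · rintro ⟨M, hE, h𝒰⟩
    have hflats : compl ⁻¹' 𝒰 = {F | M.IsFlat F} := by
      ext F
      simp [h𝒰, Matroid.exists_cocircuits_sUnion_eq_iff, hE]
    exact hflats ▸ M.flatAxioms_setOf_isFlat hE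
  · intro h
    refine ⟨h.matroid, h.matroid_ground, fun X ↦ ?_⟩
    rw [Matroid.exists_cocircuits_sUnion_eq_iff, h.matroid_ground, ← compl_eq_univ_sdiff,
      h.matroid_isFlat_iff]
    simp
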